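/- arXiv:2406.08584 — 2 statements merged into one kernel-verified Lean document; each statement's English description precedes it below -/
import Mathlib

section
/- Let {a_i}_{i∈ι} be an orthonormal basis of E, T > 0, L : ℝ → (E →ₗ[ℂ] E), and let v : ℝ → E be differentiable on [0,T] with ‖v t‖ = 1 and ⟨a_i, v t⟩ ≠ 0 for all i and all t ∈ [0,T], satisfying the normalized master equation v'(t) = L t (v t) − Re⟨v t, L t (v t)⟩ • v t. For each t let P_t be the rank-one operator x ↦ ⟨v t, x⟩ • v t and let L_cl t := Σ_i (⟨a_i, (L t ∘ P_t − P_t ∘ (L t)†) a_i⟩ / (2·|⟨a_i, v t⟩|²)) • P_{a_i}. Then for every t ∈ [0,T], each function s ↦ ‖⟨a_i, v s⟩‖ is differentiable at t and the variance of the non-classical part equals the squared speed of the amplitude moduli: ‖(L t − L_cl t)(v t)‖² − |⟨v t, (L t − L_cl t)(v t)⟩|² = Σ_i (deriv (fun s => ‖⟨a_i, v s⟩‖) t)². -/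
/-!
Write `cᵢ = ⟨aᵢ, v⟩`, `dᵢ = ⟨aᵢ, L v⟩` and `rᵢ = Re (conj cᵢ * dᵢ)`. The coefficient of `L_cl` on
`P_{aᵢ}` is `i Im (conj cᵢ dᵢ) / |cᵢ|²`, so subtracting it from `L` cancels the imaginary part of
`conj cᵢ dᵢ`: the non-classical part `w = (L - L_cl) v` has coordinates `rᵢ / conj cᵢ`, whence
`‖w‖² - |⟨v, w⟩|² = Σ rᵢ² / |cᵢ|² - (Σ rᵢ)²`. On the other side the master equation gives
`d|cᵢ|/dt = (rᵢ - α |cᵢ|²) / |cᵢ|` with `α = Re ⟨v, L v⟩ = Σ rᵢ`, and expanding the square with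
`Σ |cᵢ|² = 1` yields the same quantity.
-/

/-- The rank-one operator `x ↦ ⟨u, x⟩ • u`. -/
noncomputable def rankOne {E : Type*} [NormedAddCommGroup E] [InnerProductSpace ℂ E]
    (u : E) : E →ₗ[ℂ] E :=
  (LinearMap.toSpanSingleton ℂ E u).comp (innerSL ℂ u).toLinearMap

/-- The classical part `L_cl t` of the time-dependent Liouvillian `L t` relative to the
orthonormal basis `a` and the time-evolved state vector `v t`. -/
noncomputable def classicalPartL {E : Type*} [NormedAddCommGroup E] [InnerProductSpace ℂ E]
    [FiniteDimensional ℂ E] {ι : Type*} [Fintype ι]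
    (a : OrthonormalBasis ι ℂ E) (L : ℝ → (E →ₗ[ℂ] E)) (v : ℝ → E) (t : ℝ) : E →ₗ[ℂ] E :=
  ∑ i, ((inner ℂ (a i)
        ((L t ∘ₗ rankOne (v t) - rankOne (v t) ∘ₗ LinearMap.adjoint (L t)) (a i)) : ℂ) /
      (2 * (‖(inner ℂ (a i) (v t) : ℂ)‖ ^ 2 : ℂ))) • rankOne (a i)

open scoped ComplexConjugate InnerProductSpace

theorem rankOne_apply {E : Type*} [NormedAddCommGroup E] [InnerProductSpace ℂ E] (u x : E) :
    rankOne u x = ⟪u, x⟫_ℂ • u :=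
  rfl

theorem HasDerivAt.norm {F : Type*} [NormedAddCommGroup F] [InnerProductSpace ℝ F]
    {f : ℝ → F} {f' : F} {x : ℝ} (hf : HasDerivAt f f' x) (h0 : f x ≠ 0) :
    HasDerivAt (fun y => ‖f y‖) (⟪f x, f'⟫_ℝ / ‖f x‖) x := by
  have hpos : 0 < ‖f x‖ := norm_pos_iff.mpr h0
  have hsqrt := (Real.hasDerivAt_sqrt (by positivity)).comp x hf.norm_sq
  simp only [Function.comp_def, Real.sqrt_sq (norm_nonneg _)] at hsqrt
  exact hsqrt.congr_deriv (by field_simp)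

theorem Complex.sub_div_two_normSq_mul_eq {c : ℂ} (hc : c ≠ 0) (d : ℂ) :
    d - (conj c * d - c * conj d) / (2 * (‖c‖ : ℂ) ^ 2) * c = ⟪c, d⟫_ℝ / conj c := by
  have hc' : conj c ≠ 0 := (map_ne_zero _).mpr hc
  rw [← Complex.conj_mul', Complex.inner, Complex.re_eq_add_conj]
  field_simp
  simp only [map_mul, Complex.conj_conj]
  ring

theorem sum_sq_div_sub_mul_sq_eq_of_sum_sq_eq_one {ι : Type*} [Fintype ι] (n r : ι → ℝ) (α : ℝ)
    (hn : ∀ i, n i ≠ 0) (hn1 : ∑ i, n i ^ 2 = 1) (hr : ∑ i, r i = α) :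
    ∑ i, ((r i - α * n i ^ 2) / n i) ^ 2 = ∑ i, (r i / n i) ^ 2 - α ^ 2 := by
  have hterm : ∀ i, ((r i - α * n i ^ 2) / n i) ^ 2
      = (r i / n i) ^ 2 - 2 * α * r i + α ^ 2 * n i ^ 2 := by
    intro i
    have := hn i
    field_simp
    ring
  simp only [hterm, Finset.sum_add_distrib, Finset.sum_sub_distrib, ← Finset.mul_sum, hn1, hr]
  ring

theorem LinearMap.inner_comp_rankOne_sub_rankOne_comp_adjoint {E : Type*} [NormedAddCommGroup E]
    [InnerProductSpace ℂ E] [FiniteDimensional ℂ E] (A : E →ₗ[ℂ] E) (u x : E) :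
    ⟪x, (A ∘ₗ rankOne u - rankOne u ∘ₗ LinearMap.adjoint A) x⟫_ℂ
      = conj ⟪x, u⟫_ℂ * ⟪x, A u⟫_ℂ - ⟪x, u⟫_ℂ * conj ⟪x, A u⟫_ℂ := by
  simp only [LinearMap.sub_apply, LinearMap.comp_apply, rankOne_apply, map_smul, inner_sub_right,
    inner_smul_right, LinearMap.adjoint_inner_right, inner_conj_symm]
  ring

section OrthonormalBasis

variable {E : Type*} [NormedAddCommGroup E] [InnerProductSpace ℂ E]
  {ι : Type*} [Fintype ι] (b : OrthonormalBasis ι ℂ E)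

theorem OrthonormalBasis.re_inner_eq_sum_real_inner (x y : E) :
    (⟪x, y⟫_ℂ).re = ∑ i, ⟪⟪b i, x⟫_ℂ, ⟪b i, y⟫_ℂ⟫_ℝ := by
  rw [← b.sum_inner_mul_inner, Complex.re_sum]
  simp only [Complex.inner, inner_conj_symm, mul_comm]

theorem OrthonormalBasis.inner_sum_smul_rankOne_apply (μ : ι → ℂ) (j : ι) (x : E) :
    ⟪b j, (∑ i, μ i • rankOne (b i)) x⟫_ℂ = μ j * ⟪b j, x⟫_ℂ := by
  classical
  simp [LinearMap.sum_apply, rankOne_apply, b.inner_eq_ite]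

theorem OrthonormalBasis.norm_sq_sub_norm_inner_sq_eq (x w : E) (r : ι → ℝ)
    (hx : ∀ i, ⟪b i, x⟫_ℂ ≠ 0) (hw : ∀ i, ⟪b i, w⟫_ℂ = r i / conj ⟪b i, x⟫_ℂ) :
    ‖w‖ ^ 2 - ‖⟪x, w⟫_ℂ‖ ^ 2 = ∑ i, (r i / ‖⟪b i, x⟫_ℂ‖) ^ 2 - (∑ i, r i) ^ 2 := by
  have hnorm : ‖w‖ ^ 2 = ∑ i, (r i / ‖⟪b i, x⟫_ℂ‖) ^ 2 := by
    simp only [← b.sum_sq_norm_inner_right w, hw, norm_div, RCLike.norm_conj, Complex.norm_real,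
      Real.norm_eq_abs, div_pow, sq_abs]
  have hinner : ⟪x, w⟫_ℂ = ∑ i, r i := by
    rw [← b.sum_inner_mul_inner]
    push_cast
    refine Finset.sum_congr rfl fun i _ => ?_
    rw [hw, ← inner_conj_symm x, mul_div_cancel₀ _ ((map_ne_zero _).mpr (hx i))]
  rw [hnorm, hinner, Complex.norm_real, Real.norm_eq_abs, sq_abs]

end OrthonormalBasis

theorem hasDerivAt_norm_inner_of_hasDerivAt {E : Type*} [NormedAddCommGroup E]
    [InnerProductSpace ℂ E] {v : ℝ → E} {y x : E} {α t : ℝ}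
    (hv : HasDerivAt v (y - α • v t) t) (hx : ⟪x, v t⟫_ℂ ≠ 0) :
    HasDerivAt (fun s => ‖⟪x, v s⟫_ℂ‖)
      ((⟪⟪x, v t⟫_ℂ, ⟪x, y⟫_ℂ⟫_ℝ - α * ‖⟪x, v t⟫_ℂ‖ ^ 2) / ‖⟪x, v t⟫_ℂ‖) t := by
  have hcoord : HasDerivAt (fun s => ⟪x, v s⟫_ℂ) ⟪x, y - α • v t⟫_ℂ t :=
    ((innerSL ℂ x).restrictScalars ℝ).hasFDerivAt.comp_hasDerivAt t hv
  have h := hcoord.norm hx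
  rwa [inner_sub_right, inner_smul_right_eq_smul, inner_sub_right, real_inner_smul_right,
    real_inner_self_eq_norm_sq] at h

theorem inner_sub_classicalPartL_apply {E : Type*} [NormedAddCommGroup E]
    [InnerProductSpace ℂ E] [FiniteDimensional ℂ E] {ι : Type*} [Fintype ι]
    (a : OrthonormalBasis ι ℂ E) (L : ℝ → (E →ₗ[ℂ] E)) (v : ℝ → E) (t : ℝ) (j : ι)
    (hj : ⟪a j, v t⟫_ℂ ≠ 0) :
    ⟪a j, (L t - classicalPartL a L v t) (v t)⟫_ℂ
      = ⟪⟪a j, v t⟫_ℂ, ⟪a j, L t (v t)⟫_ℂ⟫_ℝ / conj ⟪a j, v t⟫_ℂ := by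
  rw [LinearMap.sub_apply, inner_sub_right, classicalPartL, a.inner_sum_smul_rankOne_apply,
    LinearMap.inner_comp_rankOne_sub_rankOne_comp_adjoint]
  exact Complex.sub_div_two_normSq_mul_eq hj _

theorem refined_speed_equals_amplitude_speed_general
    {E : Type*} [NormedAddCommGroup E] [InnerProductSpace ℂ E] [FiniteDimensional ℂ E]
    {ι : Type*} [Fintype ι] (a : OrthonormalBasis ι ℂ E)
    (T : ℝ) (L : ℝ → (E →ₗ[ℂ] E)) (v : ℝ → E)
    (hnorm : ∀ t ∈ Set.Icc (0 : ℝ) T, ‖v t‖ = 1)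
    (hne : ∀ i, ∀ t ∈ Set.Icc (0 : ℝ) T, (inner ℂ (a i) (v t) : ℂ) ≠ 0)
    (hode : ∀ t ∈ Set.Icc (0 : ℝ) T,
      HasDerivAt v (L t (v t) - (inner ℂ (v t) (L t (v t)) : ℂ).re • v t) t) :
    ∀ t ∈ Set.Icc (0 : ℝ) T,
      (∀ i, DifferentiableAt ℝ (fun s => ‖(inner ℂ (a i) (v s) : ℂ)‖) t) ∧
      ‖(L t - classicalPartL a L v t) (v t)‖ ^ 2 -
          ‖(inner ℂ (v t) ((L t - classicalPartL a L v t) (v t)) : ℂ)‖ ^ 2 =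
        ∑ i, (deriv (fun s => ‖(inner ℂ (a i) (v s) : ℂ)‖) t) ^ 2 := by
  intro t ht
  have hc := fun i => hne i t ht
  have hderiv := fun i => hasDerivAt_norm_inner_of_hasDerivAt (hode t ht) (hc i)
  refine ⟨fun i => (hderiv i).differentiableAt, ?_⟩
  have hunit : ∑ i, ‖⟪a i, v t⟫_ℂ‖ ^ 2 = 1 := by
    rw [a.sum_sq_norm_inner_right, hnorm t ht, one_pow]
  rw [a.norm_sq_sub_norm_inner_sq_eq (v t) _ _ hc
      fun i => inner_sub_classicalPartL_apply a L v t i (hc i),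
    ← a.re_inner_eq_sum_real_inner (v t) (L t (v t))]
  simp only [fun i => (hderiv i).deriv]
  exact (sum_sq_div_sub_mul_sq_eq_of_sum_sq_eq_one _ _ _ (fun i => norm_ne_zero_iff.mpr (hc i))
    hunit (a.re_inner_eq_sum_real_inner _ _).symm).symm

/-- The key pointwise identity in the proof of Theorem 2: the variance of the non-classical
part of the Liouvillian equals the squared speed of the amplitude moduli `|⟨a_i, v t⟩|`. -/
theorem refined_speed_equals_amplitude_speed
    {E : Type*} [NormedAddCommGroup E] [InnerProductSpace ℂ E] [FiniteDimensional ℂ E]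
    {ι : Type*} [Fintype ι] (a : OrthonormalBasis ι ℂ E)
    (T : ℝ) (hT : 0 < T) (L : ℝ → (E →ₗ[ℂ] E)) (v : ℝ → E)
    (hnorm : ∀ t ∈ Set.Icc (0 : ℝ) T, ‖v t‖ = 1)
    (hne : ∀ i, ∀ t ∈ Set.Icc (0 : ℝ) T, (inner ℂ (a i) (v t) : ℂ) ≠ 0)
    (hode : ∀ t ∈ Set.Icc (0 : ℝ) T,
      HasDerivAt v (L t (v t) - (inner ℂ (v t) (L t (v t)) : ℂ).re • v t) t) :
    ∀ t ∈ Set.Icc (0 : ℝ) T,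
      (∀ i, DifferentiableAt ℝ (fun s => ‖(inner ℂ (a i) (v s) : ℂ)‖) t) ∧
      ‖(L t - classicalPartL a L v t) (v t)‖ ^ 2 -
          ‖(inner ℂ (v t) ((L t - classicalPartL a L v t) (v t)) : ℂ)‖ ^ 2 =
        ∑ i, (deriv (fun s => ‖(inner ℂ (a i) (v s) : ℂ)‖) t) ^ 2 :=
  refined_speed_equals_amplitude_speed_general a T L v hnorm hne hode
end

section
/- Let T > 0, let L : ℝ → (E →ₗ[ℂ] E) be a time-dependent family of operators, and let v : ℝ → E be differentiable on [0,T] with ‖v t‖ = 1, satisfying v'(t) = L t (v t) − Re⟨v t, L t (v t)⟩ • v t. Then for every t ∈ [0,T], the function s ↦ ‖⟨v 0, v s⟩‖² is differentiable at t and |deriv (fun s => ‖⟨v 0, v s⟩‖²) t| ≤ 2·√(‖L t (v t)‖² − |⟨v t, L t (v t)⟩|²)·‖⟨v 0, v t⟩‖·√(1 − ‖⟨v 0, v t⟩‖²). -/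
/-!
With `c = ⟨v 0, v t⟩` and `b = ⟨v t, L (v t)⟩`, the derivative of `|⟨v 0, v s⟩|²` at `t` is
`2 Re(c̄ ⟨v 0, v' t⟩)`, and inside `Re(c̄ · _)` the normalization term `(Re b) c` of the master
equation may be replaced by `c b`. Then `⟨v 0, L (v t)⟩ - c b` is the inner product of the
components of `v 0` and `L (v t)` orthogonal to `v t`, whose norms are `√(1 - |c|²)` and `ΔL`,
so Cauchy–Schwarz gives the bound.
-/
open scoped InnerProductSpace ComplexConjugate

section Projection

variable {𝕜 E : Type*} [RCLike 𝕜] [NormedAddCommGroup E] [InnerProductSpace 𝕜 E]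

theorem norm_sub_inner_smul_sq {u : E} (hu : ‖u‖ = 1) (x : E) :
    ‖x - ⟪u, x⟫_𝕜 • u‖ ^ 2 = ‖x‖ ^ 2 - ‖⟪u, x⟫_𝕜‖ ^ 2 := by
  rw [@norm_sub_sq 𝕜, inner_smul_right, ← inner_conj_symm, RCLike.conj_mul, norm_smul, hu,
    RCLike.norm_conj]
  norm_cast
  ring

theorem inner_sub_inner_smul_sub_inner_smul {u : E} (hu : ‖u‖ = 1) (a x : E) :
    ⟪a - ⟪u, a⟫_𝕜 • u, x - ⟪u, x⟫_𝕜 • u⟫_𝕜 = ⟪a, x⟫_𝕜 - ⟪a, u⟫_𝕜 * ⟪u, x⟫_𝕜 := by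
  have huu : ⟪u, u⟫_𝕜 = 1 := by simp [inner_self_eq_norm_sq_to_K, hu]
  simp only [inner_sub_left, inner_sub_right, inner_smul_left, inner_smul_right, inner_conj_symm,
    huu]
  ring

theorem norm_inner_sub_inner_mul_inner_le {u : E} (hu : ‖u‖ = 1) (a x : E) :
    ‖⟪a, x⟫_𝕜 - ⟪a, u⟫_𝕜 * ⟪u, x⟫_𝕜‖ ≤
      √(‖a‖ ^ 2 - ‖⟪a, u⟫_𝕜‖ ^ 2) * √(‖x‖ ^ 2 - ‖⟪u, x⟫_𝕜‖ ^ 2) := by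
  rw [← inner_sub_inner_smul_sub_inner_smul hu, norm_inner_symm a u,
    ← norm_sub_inner_smul_sq hu, ← norm_sub_inner_smul_sq hu, Real.sqrt_sq (norm_nonneg _),
    Real.sqrt_sq (norm_nonneg _)]
  exact norm_inner_le_norm _ _

end Projection

section MasterEquation

variable {E : Type*} [NormedAddCommGroup E] [InnerProductSpace ℂ E]

theorem HasDerivAt.norm_inner_sq {f : ℝ → E} {f' : E} {t : ℝ} (a : E) (hf : HasDerivAt f f' t) :
    HasDerivAt (fun s => ‖⟪a, f s⟫_ℂ‖ ^ 2) (2 * (conj ⟪a, f t⟫_ℂ * ⟪a, f'⟫_ℂ).re) t := by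
  have h : HasDerivAt (fun s => ⟪a, f s⟫_ℂ) ⟪a, f'⟫_ℂ t := by
    simpa using (hasDerivAt_const t a).inner ℂ hf
  simpa [Complex.inner, mul_comm] using h.norm_sq

theorem re_conj_mul_sub_re_mul (c y b : ℂ) :
    (conj c * (y - b.re * c)).re = (conj c * (y - c * b)).re := by
  simp only [Complex.mul_re, Complex.sub_re, Complex.mul_im, Complex.sub_im, Complex.conj_re,
    Complex.conj_im, Complex.ofReal_re, Complex.ofReal_im]
  ring

theorem HasDerivAt.norm_inner_sq_of_master_eq {L : E →ₗ[ℂ] E} {v : ℝ → E} {t : ℝ} (a : E)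
    (hv : HasDerivAt v (L (v t) - (⟪v t, L (v t)⟫_ℂ).re • v t) t) :
    HasDerivAt (fun s => ‖⟪a, v s⟫_ℂ‖ ^ 2)
      (2 * (conj ⟪a, v t⟫_ℂ * (⟪a, L (v t)⟫_ℂ - ⟪a, v t⟫_ℂ * ⟪v t, L (v t)⟫_ℂ)).re) t := by
  convert hv.norm_inner_sq a using 2
  rw [inner_sub_right, ← Complex.coe_smul, inner_smul_right, re_conj_mul_sub_re_mul]

end MasterEquation

theorem overlap_rate_bound_general
    {E : Type*} [NormedAddCommGroup E] [InnerProductSpace ℂ E]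
    (T : ℝ) (hT : 0 < T) (L : ℝ → (E →ₗ[ℂ] E)) (v : ℝ → E)
    (hnorm : ∀ t ∈ Set.Icc (0 : ℝ) T, ‖v t‖ = 1)
    (hode : ∀ t ∈ Set.Icc (0 : ℝ) T,
      HasDerivAt v (L t (v t) - (inner ℂ (v t) (L t (v t)) : ℂ).re • v t) t) :
    ∀ t ∈ Set.Icc (0 : ℝ) T,
      DifferentiableAt ℝ (fun s => ‖(inner ℂ (v 0) (v s) : ℂ)‖ ^ 2) t ∧
      |deriv (fun s => ‖(inner ℂ (v 0) (v s) : ℂ)‖ ^ 2) t| ≤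
        2 * Real.sqrt (‖L t (v t)‖ ^ 2 - ‖(inner ℂ (v t) (L t (v t)) : ℂ)‖ ^ 2) *
          ‖(inner ℂ (v 0) (v t) : ℂ)‖ * Real.sqrt (1 - ‖(inner ℂ (v 0) (v t) : ℂ)‖ ^ 2) := by
  intro t ht
  have hderiv := (hode t ht).norm_inner_sq_of_master_eq (v 0)
  refine ⟨hderiv.differentiableAt, ?_⟩
  have hcov := norm_inner_sub_inner_mul_inner_le (𝕜 := ℂ) (hnorm t ht) (v 0) (L t (v t))
  rw [hnorm 0 ⟨le_rfl, hT.le⟩, one_pow] at hcov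
  rw [hderiv.deriv, abs_mul, abs_two]
  set c := ⟪v 0, v t⟫_ℂ
  set cov := ⟪v 0, L t (v t)⟫_ℂ - c * ⟪v t, L t (v t)⟫_ℂ
  calc 2 * |(conj c * cov).re|
      ≤ 2 * (‖c‖ * ‖cov‖) := by grw [Complex.abs_re_le_norm, norm_mul, Complex.norm_conj]
    _ ≤ 2 * (‖c‖ * (√(1 - ‖c‖ ^ 2) * √(‖L t (v t)‖ ^ 2 - ‖⟪v t, L t (v t)⟫_ℂ‖ ^ 2))) := by
        grw [hcov]
    _ = _ := by ring

/-- Eq. (B4) of the paper: the rate of change of the overlap `|⟨v 0, v t⟩|²` is bounded by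
`2 ΔL Δ𝒫₀ = 2 ΔL |⟨v 0, v t⟩| √(1 − |⟨v 0, v t⟩|²)`. -/
theorem overlap_rate_bound
    {E : Type*} [NormedAddCommGroup E] [InnerProductSpace ℂ E] [FiniteDimensional ℂ E]
    (T : ℝ) (hT : 0 < T) (L : ℝ → (E →ₗ[ℂ] E)) (v : ℝ → E)
    (hnorm : ∀ t ∈ Set.Icc (0 : ℝ) T, ‖v t‖ = 1)
    (hode : ∀ t ∈ Set.Icc (0 : ℝ) T,
      HasDerivAt v (L t (v t) - (inner ℂ (v t) (L t (v t)) : ℂ).re • v t) t) :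
    ∀ t ∈ Set.Icc (0 : ℝ) T,
      DifferentiableAt ℝ (fun s => ‖(inner ℂ (v 0) (v s) : ℂ)‖ ^ 2) t ∧
      |deriv (fun s => ‖(inner ℂ (v 0) (v s) : ℂ)‖ ^ 2) t| ≤
        2 * Real.sqrt (‖L t (v t)‖ ^ 2 - ‖(inner ℂ (v t) (L t (v t)) : ℂ)‖ ^ 2) *
          ‖(inner ℂ (v 0) (v t) : ℂ)‖ * Real.sqrt (1 - ‖(inner ℂ (v 0) (v t) : ℂ)‖ ^ 2) :=
  overlap_rate_bound_general T hT L v hnorm hode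
end
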